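/- arXiv:1704.06536 — 7 statements merged into one kernel-verified Lean document; each statement's English description precedes it below -/
import Mathlib

section
/- Let G be a connected graph and A ⊆ V(G) a set of k ≥ 2 vertices. If H is a minimal induced connected subgraph of G containing A, then every subtree of H has at most k leaves. -/
/-!
Any connected subgraph `H` of `G` with vertices in `S` can be grown, one pendant edge `uv` with
`v ∈ S` new at a time (such an edge exists because `G[S]` is connected), until it spans `S`.
Adding a pendant edge does not decrease the number of leaves: the leaves other than `u` remain
leaves and `v` is a new one. Once `H` spans `S`, removing a leaf `v` keeps `G[S \ {v}]` connected,
so minimality of `S` forces `v ∈ A`; hence `H` has at most `|A| = k` leaves.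
-/

namespace SimpleGraph

variable {V : Type*} {G : SimpleGraph V}

theorem Preconnected.exists_adj_mem_sdiff_of_induce {S s : Set V}
    (hS : (G.induce S).Preconnected) (hs : s ⊆ S) {a b : V} (ha : a ∈ s) (hb : b ∈ S \ s) :
    ∃ u ∈ s, ∃ v ∈ S \ s, G.Adj u v := by
  obtain ⟨p⟩ := hS ⟨a, hs ha⟩ ⟨b, hb.1⟩
  obtain ⟨d, -, hd₁, hd₂⟩ := p.exists_boundary_dart {c : S | (c : V) ∈ s} ha hb.2
  exact ⟨d.fst, hd₁, d.snd, ⟨d.snd.2, hd₂⟩, d.adj⟩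

namespace Subgraph

def leaves (H : G.Subgraph) : Set V := {v | (H.neighborSet v).ncard = 1}

variable {H : G.Subgraph} {u v : V}

theorem mem_leaves : v ∈ H.leaves ↔ (H.neighborSet v).ncard = 1 := Iff.rfl

theorem mem_verts_of_mem_leaves (hv : v ∈ H.leaves) : v ∈ H.verts := by
  obtain ⟨w, hw⟩ := Set.ncard_eq_one.mp hv
  exact H.edge_vert (show w ∈ H.neighborSet v by simp [hw])

theorem Connected.induce_verts_sdiff_leaf [Finite V] (hH : H.Connected) (hv : v ∈ H.leaves) :
    (G.induce (H.verts \ {v})).Connected := by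
  classical
  have := Fintype.ofFinite V
  have hdeg : H.coe.degree ⟨v, mem_verts_of_mem_leaves hv⟩ = 1 := by
    rw [coe_degree, Subgraph.degree, ← Nat.card_eq_fintype_card, Nat.card_coe_set_eq]
    exact hv
  refine (hH.coe.induce_compl_singleton_of_degree_eq_one hdeg).map
    ⟨fun w ↦ ⟨w.1.1, w.1.2, fun h ↦ w.2 (Subtype.ext h)⟩, fun h ↦ H.adj_sub h⟩ ?_
  rintro ⟨w, hw, hwv⟩
  exact ⟨⟨⟨w, hw⟩, fun h ↦ hwv (congrArg Subtype.val h)⟩, rfl⟩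

theorem Connected.leaves_subset_of_minimal [Finite V] {A S : Set V} (hH : H.Connected)
    (hS : Minimal (fun s ↦ A ⊆ s ∧ (G.induce s).Connected) S) (hverts : H.verts = S) :
    H.leaves ⊆ A := by
  intro v hv
  by_contra hvA
  have hconn := hH.induce_verts_sdiff_leaf hv
  rw [hverts] at hconn
  have hsub : A ⊆ S \ {v} := Set.subset_sdiff_singleton hS.prop.1 hvA
  have hvS : v ∈ S \ {v} := by
    rw [hS.eq_of_subset ⟨hsub, hconn⟩ Set.sdiff_subset, ← hverts]
    exact mem_verts_of_mem_leaves hv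
  exact hvS.2 rfl

theorem ncard_leaves_le_sup_subgraphOfAdj [Finite V] (hv : v ∉ H.verts)
    (huv : G.Adj u v) : H.leaves.ncard ≤ (H ⊔ G.subgraphOfAdj huv).leaves.ncard := by
  have hv_leaf : v ∈ (H ⊔ G.subgraphOfAdj huv).leaves := by
    have : H.neighborSet v = ∅ :=
      Set.eq_empty_of_forall_notMem fun w hw ↦ hv (H.edge_vert hw)
    simp [mem_leaves, neighborSet_sup, this, neighborSet_snd_subgraphOfAdj]
  have hsub : insert v (H.leaves \ {u}) ⊆ (H ⊔ G.subgraphOfAdj huv).leaves := by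
    refine Set.insert_subset hv_leaf fun w ⟨hw, hwu⟩ ↦ ?_
    have hwv : w ≠ v := fun h ↦ hv (h ▸ mem_verts_of_mem_leaves hw)
    simpa [mem_leaves, neighborSet_sup, neighborSet_subgraphOfAdj_of_ne_of_ne huv hwu hwv]
      using hw
  have hv' : v ∉ H.leaves \ {u} := fun h ↦ hv (mem_verts_of_mem_leaves h.1)
  calc H.leaves.ncard ≤ (H.leaves \ {u}).ncard + 1 := by
        have := Set.pred_ncard_le_ncard_sdiff_singleton H.leaves u; omega
    _ = (insert v (H.leaves \ {u})).ncard := (Set.ncard_insert_of_notMem hv').symm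
    _ ≤ _ := Set.ncard_le_ncard hsub

theorem Connected.ncard_leaves_le_of_minimal [Finite V] {A S : Set V} (hH : H.Connected)
    (hS : Minimal (fun s ↦ A ⊆ s ∧ (G.induce s).Connected) S) (hHS : H.verts ⊆ S) :
    H.leaves.ncard ≤ A.ncard := by
  induction hn : (S \ H.verts).ncard generalizing H with
  | zero =>
    have hverts : H.verts = S := hHS.antisymm (Set.sdiff_eq_empty.mp ((Set.ncard_eq_zero).mp hn))
    exact Set.ncard_le_ncard (hH.leaves_subset_of_minimal hS hverts)
  | succ n ih =>
    obtain ⟨x, hx⟩ := Set.nonempty_of_ncard_ne_zero (by rw [hn]; omega)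
    obtain ⟨u, hu, v, hv, huv⟩ :=
      hS.prop.2.preconnected.exists_adj_mem_sdiff_of_induce hHS hH.nonempty.some_mem hx
    have hverts : (H ⊔ G.subgraphOfAdj huv).verts = insert v H.verts := by
      simp [hu]
    refine (ncard_leaves_le_sup_subgraphOfAdj hv.2 huv).trans (ih ?_ ?_ ?_)
    · exact connected_sup hH.preconnected (subgraphOfAdj_connected huv).preconnected
        ⟨u, hu, by simp⟩
    · rw [hverts]
      exact Set.insert_subset hv.1 hHS
    · rw [hverts, ← Set.union_singleton, ← Set.sdiff_sdiff, ← Nat.add_right_cancel_iff,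
        Set.ncard_sdiff_singleton_add_one hv, hn]

end Subgraph

def toSubgraphOfLEInduce {U : Set V} (T : SimpleGraph U) (hT : T ≤ G.induce U) : G.Subgraph where
  verts := U
  Adj := (T.map (Function.Embedding.subtype _)).Adj
  adj_sub h := (map_le_iff_le_comap _ _ _).mpr hT h
  edge_vert := by
    rintro _ _ ⟨-, a, -, -, rfl, -⟩
    exact a.2
  symm := (T.map _).symm

section toSubgraphOfLEInduce

variable {U : Set V} {T : SimpleGraph U} (hT : T ≤ G.induce U)

@[simp]
theorem coe_toSubgraphOfLEInduce : (toSubgraphOfLEInduce T hT).coe = T := by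
  ext
  exact map_adj_apply (f := Function.Embedding.subtype _)

theorem neighborSet_toSubgraphOfLEInduce (u : U) :
    (toSubgraphOfLEInduce T hT).neighborSet u = (↑) '' T.neighborSet u :=
  neighborSet_map (G := T) (Function.Embedding.subtype _) u

theorem leaves_toSubgraphOfLEInduce :
    (toSubgraphOfLEInduce T hT).leaves = (↑) '' {u : U | (T.neighborSet u).ncard = 1} := by
  ext v
  constructor
  · intro hv
    lift v to U using Subgraph.mem_verts_of_mem_leaves hv
    refine ⟨v, ?_, rfl⟩
    rwa [Subgraph.mem_leaves, neighborSet_toSubgraphOfLEInduce,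
      Set.ncard_image_of_injective _ Subtype.val_injective] at hv
  · rintro ⟨u, hu, rfl⟩
    rwa [Subgraph.mem_leaves, neighborSet_toSubgraphOfLEInduce,
      Set.ncard_image_of_injective _ Subtype.val_injective]

theorem Connected.toSubgraphOfLEInduce (h : T.Connected) :
    (toSubgraphOfLEInduce T hT).Connected := by
  rw [Subgraph.connected_iff', coe_toSubgraphOfLEInduce]
  exact h

end toSubgraphOfLEInduce

end SimpleGraph

theorem minimal_connected_subgraph_subtree_leaves_general {V : Type*} [Fintype V]
    (G : SimpleGraph V) (A S : Set V) (k : ℕ)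
    (hA : A.ncard = k) (hAS : A ⊆ S) (hconn : (G.induce S).Connected)
    (hmin : ∀ S' : Set V, S' ⊆ S → A ⊆ S' → (G.induce S').Connected → S' = S) :
    ∀ (U : Set V), U ⊆ S → ∀ (T : SimpleGraph U), T ≤ G.induce U → T.IsTree →
      {u : U | (T.neighborSet u).ncard = 1}.ncard ≤ k := by
  intro U hU T hTle hT
  have hS : Minimal (fun s ↦ A ⊆ s ∧ (G.induce s).Connected) S :=
    ⟨⟨hAS, hconn⟩, fun S' hS' hle ↦ (hmin S' hle hS'.1 hS'.2).ge⟩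
  rw [← Set.ncard_image_of_injective _ Subtype.val_injective,
    ← SimpleGraph.leaves_toSubgraphOfLEInduce hTle, ← hA]
  exact (hT.connected.toSubgraphOfLEInduce hTle).ncard_leaves_le_of_minimal hS hU

/-- If `H = G.induce S` is a minimal induced connected subgraph of a
connected graph `G` containing a set `A` of `k ≥ 2` vertices, then every subtree of
`H` (a tree that is a subgraph of `H`, on a vertex set `U ⊆ S`) has at most `k`
leaves (vertices of degree 1 in the tree). -/
theorem minimal_connected_subgraph_subtree_leaves {V : Type*} [Fintype V]
    (G : SimpleGraph V) (hG : G.Connected) (A S : Set V) (k : ℕ) (hk : 2 ≤ k)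
    (hA : A.ncard = k) (hAS : A ⊆ S) (hconn : (G.induce S).Connected)
    (hmin : ∀ S' : Set V, S' ⊆ S → A ⊆ S' → (G.induce S').Connected → S' = S) :
    ∀ (U : Set V), U ⊆ S → ∀ (T : SimpleGraph U), T ≤ G.induce U → T.IsTree →
      {u : U | (T.neighborSet u).ncard = 1}.ncard ≤ k :=
  minimal_connected_subgraph_subtree_leaves_general G A S k hA hAS hconn hmin
end

section
/- Let G be a connected graph and A ⊆ V(G) with |A| = k ≥ 2. Every minimal induced connected subgraph H of G containing A can be 2-coloured so that each monochromatic component has at most ⌈k/2⌉ vertices. -/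
/-!
Fix a root `r ∈ A` and prove more: there is a colouring in which every monochromatic connected
set has at most `⌈k/2⌉` vertices, and at most `⌊k/2⌋` if it contains `r`. Induct on `|S|`.
If `S = A`, give `⌈k/2⌉` vertices other than `r` one colour and the rest the other. Otherwise a
vertex `v ∈ S \ A` is, by minimality, a cut vertex of `G[S]`; split `S - v` into `C ∋ r` and
`D` with no edges between them. Then `C + v` and `D + v` are minimal connected sets containing
`(A ∩ C) + v` and `(A ∩ D) + v`, of sizes `k₁ + 1` and `k₂ + 1` with `k₁, k₂ ≥ 1`. Colour
`C + v` with root `r` and `D + v` with root `v`, with matching colours at `v`: a monochromatic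
set through `v` has at most `⌈(k₁ + 1)/2⌉ + ⌊(k₂ + 1)/2⌋ - 1 ≤ ⌈k/2⌉` vertices, and at most
`⌊k/2⌋` if it also contains `r`.
-/

open Set Function

lemma Set.ncard_inter_add_ncard_inter_of_inter_eq_singleton {α : Type*} [Finite α]
    {M X Y : Set α} {v : α} (hM : M ⊆ X ∪ Y) (hXY : X ∩ Y = {v}) (hv : v ∈ M) :
    (M ∩ X).ncard + (M ∩ Y).ncard = M.ncard + 1 := by
  rw [← ncard_union_add_ncard_inter, ← inter_union_distrib_left, inter_eq_left.2 hM,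
    ← inter_inter_distrib_left, hXY, inter_eq_right.2 (singleton_subset_iff.2 hv),
    ncard_singleton]

namespace SimpleGraph

variable {V κ : Type*} {G : SimpleGraph V}

lemma exists_walk_of_connected_induce {s : Set V} (h : (G.induce s).Connected) {x y : V}
    (hx : x ∈ s) (hy : y ∈ s) : ∃ p : G.Walk x y, ∀ z ∈ p.support, z ∈ s := by
  obtain ⟨q⟩ := h.preconnected ⟨x, hx⟩ ⟨y, hy⟩
  refine ⟨q.map (Embedding.induce s).toHom, fun z hz => ?_⟩
  obtain ⟨z, -, rfl⟩ := List.mem_map.1 (Walk.support_map _ _ ▸ hz)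
  exact z.2

lemma connected_induce_of_forall_walk {s : Set V} {u : V} (hu : u ∈ s)
    (h : ∀ x ∈ s, ∃ p : G.Walk x u, ∀ z ∈ p.support, z ∈ s) : (G.induce s).Connected :=
  induce_connected_of_patches u hu fun hx => by
    obtain ⟨p, hp⟩ := h _ hx
    exact ⟨s, subset_rfl, hu, hx, (p.induce s hp).reachable.symm⟩

def IsComponentUnion (G : SimpleGraph V) (T C : Set V) : Prop :=
  C ⊆ T ∧ ∀ u ∈ C, ∀ w ∈ T, G.Adj u w → w ∈ C

namespace IsComponentUnion

variable {T C W : Set V} {v : V}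

lemma sdiff (h : IsComponentUnion G T C) : IsComponentUnion G T (T \ C) :=
  ⟨sdiff_subset, fun u hu w hw huw => ⟨hw, fun hwC => hu.2 (h.2 w hwC u hu.1 huw.symm)⟩⟩

lemma mem_of_walk (h : IsComponentUnion G T C) {x y : V} (p : G.Walk x y)
    (hp : ∀ z ∈ p.support, z ∈ T) (hx : x ∈ C) : y ∈ C := by
  induction p with
  | nil => exact hx
  | cons hxy p ih =>
    exact ih (fun z hz => hp z (List.mem_cons_of_mem _ hz))
      (h.2 _ hx _ (hp _ (List.mem_cons_of_mem _ p.start_mem_support)) hxy)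

lemma subset_of_connected (h : IsComponentUnion G T C) {M : Set V}
    (hM : (G.induce M).Connected) (hMT : M ⊆ T) {x : V} (hxM : x ∈ M) (hxC : x ∈ C) : M ⊆ C :=
  fun _ hy =>
    have ⟨p, hp⟩ := exists_walk_of_connected_induce hM hxM hy
    h.mem_of_walk p (fun z hz => hMT (hp z hz)) hxC

lemma exists_walk_inter_insert (h : IsComponentUnion G T C) (hWT : W \ {v} ⊆ T) :
    ∀ {x : V} (p : G.Walk x v), (∀ z ∈ p.support, z ∈ W) → x ∈ insert v C →
      ∃ q : G.Walk x v, ∀ z ∈ q.support, z ∈ W ∩ insert v C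
  | _, .nil, hp, _ => ⟨.nil, by simpa using hp⟩
  | x, .cons (v := y) hxy p, hp, hx => by
    obtain rfl | hxC := hx
    · exact ⟨.nil, by simpa using hp _ (List.mem_cons_self ..)⟩
    have hyW : y ∈ W := hp y (List.mem_cons_of_mem _ p.start_mem_support)
    have hy : y ∈ insert v C := by
      by_cases hyv : y = v
      · exact .inl hyv
      · exact .inr (h.2 x hxC y (hWT ⟨hyW, hyv⟩) hxy)
    obtain ⟨q, hq⟩ :=
      exists_walk_inter_insert h hWT p (fun z hz => hp z (List.mem_cons_of_mem _ hz)) hy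
    refine ⟨.cons hxy q, fun z hz => ?_⟩
    obtain rfl | hz := List.mem_cons.1 hz
    exacts [⟨hp _ (List.mem_cons_self ..), .inr hxC⟩, hq z hz]

lemma connected_induce_inter_insert (h : IsComponentUnion G T C) (hW : (G.induce W).Connected)
    (hv : v ∈ W) (hWT : W \ {v} ⊆ T) : (G.induce (W ∩ insert v C)).Connected :=
  connected_induce_of_forall_walk ⟨hv, mem_insert v C⟩ fun _ hx =>
    have ⟨p, hp⟩ := exists_walk_of_connected_induce hW hx.1 hv
    h.exists_walk_inter_insert hWT p hp hx.2

lemma connected_induce_insert {S : Set V} (h : IsComponentUnion G (S \ {v}) C)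
    (hS : (G.induce S).Connected) (hv : v ∈ S) : (G.induce (insert v C)).Connected := by
  have := h.connected_induce_inter_insert hS hv subset_rfl
  rwa [inter_eq_right.2 (insert_subset hv (h.1.trans sdiff_subset))] at this

lemma insert_ssubset {S : Set V} (h : IsComponentUnion G (S \ {v}) C) (hv : v ∈ S)
    (hD : ((S \ {v}) \ C).Nonempty) : insert v C ⊂ S := by
  obtain ⟨d, ⟨hdS, hdv⟩, hdC⟩ := hD
  refine (ssubset_iff_of_subset (insert_subset hv (h.1.trans sdiff_subset))).2 ⟨d, hdS, ?_⟩
  rintro (rfl | hd)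
  exacts [hdv rfl, hdC hd]

end IsComponentUnion

lemma exists_isComponentUnion_of_not_connected {T : Set V} {r : V} (hr : r ∈ T)
    (hT : ¬(G.induce T).Connected) :
    ∃ C, IsComponentUnion G T C ∧ r ∈ C ∧ (T \ C).Nonempty := by
  set C := {x | ∃ p : G.Walk x r, ∀ z ∈ p.support, z ∈ T}
  have hC : IsComponentUnion G T C := by
    refine ⟨fun x ⟨p, hp⟩ => hp x p.start_mem_support, fun u ⟨p, hp⟩ w hw huw => ?_⟩
    refine ⟨.cons huw.symm p, fun z hz => ?_⟩
    obtain rfl | hz := List.mem_cons.1 hz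
    exacts [hw, hp z hz]
  refine ⟨C, hC, ⟨.nil, by simpa using hr⟩, ?_⟩
  by_contra hTC
  exact hT (connected_induce_of_forall_walk hr fun x hx =>
    by_contra fun hxC => hTC ⟨x, hx, hxC⟩)

def IsMinimalConnectedContaining (G : SimpleGraph V) (A S : Set V) : Prop :=
  Minimal (fun T => A ⊆ T ∧ (G.induce T).Connected) S

namespace IsMinimalConnectedContaining

variable {A S C : Set V} {v : V}

lemma insert_inter (hS : IsMinimalConnectedContaining G A S) (hv : v ∈ S)
    (hC : IsComponentUnion G (S \ {v}) C) :
    IsMinimalConnectedContaining G (insert v (A ∩ C)) (insert v C) := by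
  set D := (S \ {v}) \ C
  have hCS : insert v C ⊆ S := insert_subset hv (hC.1.trans sdiff_subset)
  have hDS : insert v D ⊆ S := insert_subset hv (sdiff_subset.trans sdiff_subset)
  refine ⟨⟨insert_subset_insert inter_subset_right, hC.connected_induce_insert hS.prop.2 hv⟩,
    fun T ⟨hAT, hT⟩ hTC => ?_⟩
  have hvT : v ∈ T := hAT (mem_insert v _)
  have hTD : (G.induce (T ∪ insert v D)).Connected :=
    induce_union_connected hT.preconnected
      (hC.sdiff.connected_induce_insert hS.prop.2 hv).preconnected ⟨v, hvT, mem_insert v D⟩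
  have hAT' : A ⊆ T ∪ insert v D := fun a ha => by
    by_cases haC : a ∈ C
    · exact .inl (hAT (.inr ⟨ha, haC⟩))
    by_cases hav : a = v
    · exact .inr (.inl hav)
    · exact .inr (.inr ⟨⟨hS.prop.1 ha, hav⟩, haC⟩)
  have hST : S ⊆ T ∪ insert v D := hS.2 ⟨hAT', hTD⟩ (union_subset (hTC.trans hCS) hDS)
  rintro x (rfl | hxC)
  · exact hvT
  obtain hxT | rfl | hxD := hST (hC.1 hxC).1
  exacts [hxT, ((hC.1 hxC).2 rfl).elim, (hxD.2 hxC).elim]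

lemma inter_nonempty (hS : IsMinimalConnectedContaining G A S) (hv : v ∈ S) (hvA : v ∉ A)
    (hC : IsComponentUnion G (S \ {v}) C) (hCne : C.Nonempty) : (A ∩ C).Nonempty := by
  by_contra hAC
  obtain ⟨c, hc⟩ := hCne
  have hAD : A ⊆ insert v ((S \ {v}) \ C) := fun a ha =>
    .inr ⟨⟨hS.prop.1 ha, fun hav => hvA (hav ▸ ha)⟩, fun haC => hAC ⟨a, ha, haC⟩⟩
  have hSD := hS.2 ⟨hAD, hC.sdiff.connected_induce_insert hS.prop.2 hv⟩
    (insert_subset hv (sdiff_subset.trans sdiff_subset)) (hC.1 hc).1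
  obtain rfl | hcD := hSD
  exacts [(hC.1 hc).2 rfl, hcD.2 hc]

end IsMinimalConnectedContaining

def IsMonochromatic (c : V → κ) (M : Set V) : Prop := ∀ u ∈ M, ∀ w ∈ M, c u = c w

lemma IsMonochromatic.congr {c d : V → κ} {M N : Set V} (h : IsMonochromatic c M)
    (hNM : N ⊆ M) (hcd : EqOn c d N) : IsMonochromatic d N := fun u hu w hw =>
  hcd hu ▸ hcd hw ▸ h u (hNM hu) w (hNM hw)

def IsRootedClustering (G : SimpleGraph V) (S : Set V) (k : ℕ) (r : V) (c : V → κ) : Prop :=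
  ∀ M ⊆ S, IsMonochromatic c M → (G.induce M).Connected →
    M.ncard ≤ (k + 1) / 2 ∧ (r ∈ M → M.ncard ≤ k / 2)

namespace IsRootedClustering

variable {S C : Set V} {k₁ k₂ : ℕ} {r v : V}

lemma comp {κ' : Type*} {k : ℕ} {c : V → κ} {f : κ → κ'} (h : IsRootedClustering G S k r c)
    (hf : Injective f) : IsRootedClustering G S k r (f ∘ c) :=
  fun M hMS hM => h M hMS fun u hu w hw => hf (hM u hu w hw)

lemma piecewise [Finite V] {c₁ c₂ : V → κ} [DecidablePred (· ∈ C)] (hv : v ∈ S)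
    (hC : IsComponentUnion G (S \ {v}) C) (hrC : r ∈ C) (hk₁ : 1 ≤ k₁) (hk₂ : 1 ≤ k₂)
    (h₁ : IsRootedClustering G (insert v C) (k₁ + 1) r c₁)
    (h₂ : IsRootedClustering G (insert v ((S \ {v}) \ C)) (k₂ + 1) v c₂) (hc : c₁ v = c₂ v) :
    IsRootedClustering G S (k₁ + k₂) r (C.piecewise c₁ c₂) := by
  set D := (S \ {v}) \ C
  have hvC : v ∉ C := fun h => (hC.1 h).2 rfl
  have hc₁ : EqOn (C.piecewise c₁ c₂) c₁ (insert v C) := by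
    rintro u (rfl | hu)
    exacts [(piecewise_eq_of_notMem _ _ _ hvC).trans hc.symm, piecewise_eq_of_mem _ _ _ hu]
  have hc₂ : EqOn (C.piecewise c₁ c₂) c₂ (insert v D) := by
    rintro u (rfl | hu)
    exacts [piecewise_eq_of_notMem _ _ _ hvC, piecewise_eq_of_notMem _ _ _ hu.2]
  intro M hMS hM hconn
  by_cases hvM : v ∈ M
  · have hMv : M \ {v} ⊆ S \ {v} := sdiff_subset_sdiff_left hMS
    have b₁ := h₁ _ inter_subset_right (hM.congr inter_subset_left (hc₁.mono inter_subset_right))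
      (hC.connected_induce_inter_insert hconn hvM hMv)
    have b₂ := h₂ _ inter_subset_right (hM.congr inter_subset_left (hc₂.mono inter_subset_right))
      (hC.sdiff.connected_induce_inter_insert hconn hvM hMv)
    have hunion : insert v C ∪ insert v D = S := by
      rw [← insert_union_distrib, union_sdiff_cancel hC.1, insert_sdiff_singleton,
        insert_eq_of_mem hv]
    have hinter : insert v C ∩ insert v D = {v} := by
      rw [← insert_inter_distrib, inter_sdiff_self, insert_empty_eq]
    have := ncard_inter_add_ncard_inter_of_inter_eq_singleton (hunion ▸ hMS) hinter hvM
    have := b₂.2 ⟨hvM, mem_insert v D⟩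
    exact ⟨by omega, fun hrM => by have := b₁.2 ⟨hrM, .inr hrC⟩; omega⟩
  · obtain ⟨⟨m, hm⟩⟩ := hconn.nonempty
    have hMv : M ⊆ S \ {v} := subset_sdiff_singleton hMS hvM
    by_cases hmC : m ∈ C
    · have hMC := hC.subset_of_connected hconn hMv hm hmC
      have b := h₁ M (hMC.trans (subset_insert v C))
        (hM.congr subset_rfl (hc₁.mono (hMC.trans (subset_insert v C)))) hconn
      exact ⟨by omega, fun hrM => by have := b.2 hrM; omega⟩
    · have hMD := hC.sdiff.subset_of_connected hconn hMv hm ⟨hMv hm, hmC⟩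
      have b := h₂ M (hMD.trans (subset_insert v D))
        (hM.congr subset_rfl (hc₂.mono (hMD.trans (subset_insert v D)))) hconn
      exact ⟨by omega, fun hrM => ((hMD hrM).2 hrC).elim⟩

end IsRootedClustering

lemma exists_isRootedClustering_self [Finite V] {A : Set V} {r : V} (hA : 2 ≤ A.ncard)
    (hr : r ∈ A) : ∃ c : V → Fin 2, IsRootedClustering G A A.ncard r c := by
  classical
  have hAr : (A \ {r}).ncard = A.ncard - 1 := by
    rw [ncard_sdiff (singleton_subset_iff.2 hr), ncard_singleton]
  obtain ⟨T, hTA, hT⟩ := exists_subset_card_eq (s := A \ {r}) (n := (A.ncard + 1) / 2) (by omega)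
  have hAT : (A \ T).ncard = A.ncard / 2 := by
    rw [ncard_sdiff (hTA.trans sdiff_subset), hT]
    omega
  refine ⟨fun u => if u ∈ T then 1 else 0, fun M hMA hM hconn => ?_⟩
  obtain ⟨⟨m, hm⟩⟩ := hconn.nonempty
  by_cases hmT : m ∈ T
  · have hMT : M ⊆ T := fun u hu => by_contra fun huT => by simpa [huT, hmT] using hM u hu m hm
    have := ncard_le_ncard hMT
    exact ⟨by omega, fun hrM => ((hTA (hMT hrM)).2 rfl).elim⟩
  · have hMT : M ⊆ A \ T := fun u hu => ⟨hMA hu, fun huT => by simpa [huT, hmT] using hM u hu m hm⟩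
    have := ncard_le_ncard hMT
    exact ⟨by omega, fun _ => by omega⟩

theorem exists_isRootedClustering [Finite V] {A S : Set V} {r : V}
    (hS : IsMinimalConnectedContaining G A S) (hA : 2 ≤ A.ncard) (hr : r ∈ A) :
    ∃ c : V → Fin 2, IsRootedClustering G S A.ncard r c := by
  classical
  induction hn : S.ncard using Nat.strong_induction_on generalizing A S r with
  | _ n ih =>
  by_cases hSA : S ⊆ A
  · obtain rfl := hSA.antisymm hS.prop.1
    exact exists_isRootedClustering_self hA hr
  obtain ⟨v, hvS, hvA⟩ := not_subset.1 hSA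
  have hAv : A ⊆ S \ {v} := subset_sdiff_singleton hS.prop.1 hvA
  -- by minimality, `v` is a cut vertex of `G[S]`
  obtain ⟨C, hC, hrC, hD⟩ := exists_isComponentUnion_of_not_connected (hAv hr)
    fun h => (hS.2 ⟨hAv, h⟩ sdiff_subset hvS).2 rfl
  have hC' : ((S \ {v}) \ ((S \ {v}) \ C)).Nonempty := by
    rw [sdiff_sdiff_cancel_left hC.1]
    exact ⟨r, hrC⟩
  have hAD : A ∩ ((S \ {v}) \ C) = A \ C := by rw [← inter_sdiff_assoc, inter_eq_left.2 hAv]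
  have hk := ncard_inter_add_ncard_sdiff_eq_ncard A C
  have hk₁ : 0 < (A ∩ C).ncard := (ncard_pos (toFinite _)).2 ⟨r, hr, hrC⟩
  have hk₂ : 0 < (A \ C).ncard :=
    (ncard_pos (toFinite _)).2 (hAD ▸ hS.inter_nonempty hvS hvA hC.sdiff hD)
  have hA₁ : (insert v (A ∩ C)).ncard = (A ∩ C).ncard + 1 :=
    ncard_insert_of_notMem fun h => hvA h.1
  have hA₂ : (insert v (A \ C)).ncard = (A \ C).ncard + 1 :=
    ncard_insert_of_notMem fun h => hvA h.1
  obtain ⟨c₁, h₁⟩ := ih _ (hn ▸ ncard_lt_ncard (hC.insert_ssubset hvS hD))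
    (hS.insert_inter hvS hC) (by omega) (mem_insert_of_mem v ⟨hr, hrC⟩) rfl
  obtain ⟨c₂, h₂⟩ := ih _ (hn ▸ ncard_lt_ncard (hC.sdiff.insert_ssubset hvS hC'))
    (hS.insert_inter hvS hC.sdiff) (by rw [hAD]; omega) (mem_insert v _) rfl
  rw [hA₁] at h₁
  rw [hAD, hA₂] at h₂
  exact ⟨C.piecewise c₁ ((· + (c₁ v - c₂ v)) ∘ c₂), hk ▸ h₁.piecewise hvS hC hrC hk₁ hk₂
    (h₂.comp (add_left_injective _)) (add_sub_cancel _ _).symm⟩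

end SimpleGraph

theorem minimal_connected_subgraph_two_colouring_clustering_general {V : Type*} [Fintype V]
    (G : SimpleGraph V) (A S : Set V) (k : ℕ) (hk : 2 ≤ k)
    (hA : A.ncard = k) (hAS : A ⊆ S) (hconn : (G.induce S).Connected)
    (hmin : ∀ S' : Set V, S' ⊆ S → A ⊆ S' → (G.induce S').Connected → S' = S) :
    ∃ c : V → Fin 2, ∀ M : Set V, M ⊆ S → (∀ u ∈ M, ∀ w ∈ M, c u = c w) →
      (G.induce M).Connected → M.ncard ≤ (k + 1) / 2 := by
  have hS : G.IsMinimalConnectedContaining A S :=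
    ⟨⟨hAS, hconn⟩, fun T hT hTS => (hmin T hTS hT.1 hT.2).ge⟩
  obtain ⟨r, hr⟩ := nonempty_of_ncard_ne_zero (by omega : A.ncard ≠ 0)
  obtain ⟨c, hc⟩ := G.exists_isRootedClustering hS (hA ▸ hk) hr
  exact ⟨c, fun M hMS hM hconn => hA ▸ (hc M hMS hM hconn).1⟩

/-- Every minimal induced connected subgraph `H = G.induce S` of a
connected graph `G` containing a set `A` with `|A| = k ≥ 2` can be 2-coloured so
that each monochromatic component has at most `⌈k/2⌉` vertices (equivalently,
every monochromatic connected subset of `S` has at most `⌈k/2⌉` vertices). -/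
theorem minimal_connected_subgraph_two_colouring_clustering {V : Type*} [Fintype V]
    (G : SimpleGraph V) (hG : G.Connected) (A S : Set V) (k : ℕ) (hk : 2 ≤ k)
    (hA : A.ncard = k) (hAS : A ⊆ S) (hconn : (G.induce S).Connected)
    (hmin : ∀ S' : Set V, S' ⊆ S → A ⊆ S' → (G.induce S').Connected → S' = S) :
    ∃ c : V → Fin 2, ∀ M : Set V, M ⊆ S → (∀ u ∈ M, ∀ w ∈ M, c u = c w) →
      (G.induce M).Connected → M.ncard ≤ (k + 1) / 2 :=
  minimal_connected_subgraph_two_colouring_clustering_general G A S k hk hA hAS hconn hmin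
end

section
/- Suppose a graph G has a connected partition H_1,…,H_ℓ such that each H_i is adjacent to at most k of the subgraphs H_1,…,H_{i−1}, and each H_i has maximum degree at most d. Then G is (k+1)-colourable with defect d, i.e., there is a (k+1)-colouring of V(G) in which every vertex has at most d neighbours of its own colour. -/
/-!
Colour the parts greedily in the order `H 0, H 1, …`: part `i` has at most `k` adjacent
earlier parts, so among `k + 1` colours one is unused by them, and every vertex of `H i`
receives it. A neighbour of the same colour then lies in the same part, so each vertex has
at most `d` of them.
-/

theorem Set.exists_forall_apply_ne_of_ncard_lt {β γ : Type*} [Finite γ] (f : β → γ)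
    {s : Set β} (hs : s.Finite) (h : s.ncard < Nat.card γ) : ∃ c, ∀ j ∈ s, f j ≠ c := by
  have hne : f '' s ≠ Set.univ := fun himg => by
    have := Set.ncard_image_le (f := f) hs
    rw [himg, Set.ncard_univ] at this
    omega
  obtain ⟨c, hc⟩ := (Set.ne_univ_iff_exists_notMem _).mp hne
  exact ⟨c, fun j hj hjc => hc ⟨j, hj, hjc⟩⟩

section GreedyColouring

variable {α : Type*} [Preorder α]

open Classical in
noncomputable def greedyColouring [WellFoundedLT α] (r : α → α → Prop) (k : ℕ) :
    α → Fin (k + 1) :=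
  WellFoundedLT.fix fun i col =>
    if h : ∃ c, ∀ j, (hj : j < i) → r j i → col j hj ≠ c then h.choose else 0

theorem greedyColouring_ne [Finite α] (r : α → α → Prop) {k : ℕ}
    (hr : ∀ i, {j | j < i ∧ r j i}.ncard ≤ k) {i j : α} (hji : j < i) (hr_ji : r j i) :
    greedyColouring r k j ≠ greedyColouring r k i := by
  classical
  have hfree : ∃ c, ∀ j, j < i → r j i → greedyColouring r k j ≠ c := by
    obtain ⟨c, hc⟩ := Set.exists_forall_apply_ne_of_ncard_lt (greedyColouring r k)
      (Set.toFinite {j | j < i ∧ r j i}) (by simpa using Nat.lt_succ_of_le (hr i))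
    exact ⟨c, fun j hj hrj => hc j ⟨hj, hrj⟩⟩
  have hi : greedyColouring r k i = hfree.choose := by
    unfold greedyColouring
    rw [WellFoundedLT.fix_eq]
    exact dif_pos hfree
  rw [hi]
  exact hfree.choose_spec j hji hr_ji

end GreedyColouring

theorem connected_partition_defective_colouring_general {V : Type*} [Fintype V]
    (G : SimpleGraph V) (k d ℓ : ℕ) (H : Fin ℓ → Set V)
    (hcover : ∀ v : V, ∃ i, v ∈ H i)
    (hadj : ∀ i : Fin ℓ,
      {j : Fin ℓ | j < i ∧ ∃ u ∈ H j, ∃ w ∈ H i, G.Adj u w}.ncard ≤ k)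
    (hdeg : ∀ i, ∀ v ∈ H i, {w ∈ H i | G.Adj v w}.ncard ≤ d) :
    ∃ c : V → Fin (k + 1), ∀ v : V, {w : V | G.Adj v w ∧ c w = c v}.ncard ≤ d := by
  choose part hpart using hcover
  let colour := greedyColouring (fun j i => ∃ u ∈ H j, ∃ w ∈ H i, G.Adj u w) k
  refine ⟨colour ∘ part, fun v => le_trans (Set.ncard_le_ncard ?_ (Set.toFinite _))
    (hdeg (part v) v (hpart v))⟩
  rintro w ⟨hvw, hcol⟩
  refine ⟨?_, hvw⟩
  rcases lt_trichotomy (part w) (part v) with hlt | heq | hgt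
  · exact absurd hcol (greedyColouring_ne _ hadj hlt ⟨w, hpart w, v, hpart v, hvw.symm⟩)
  · exact heq ▸ hpart w
  · exact absurd hcol.symm (greedyColouring_ne _ hadj hgt ⟨v, hpart v, w, hpart w, hvw⟩)

/-- If a graph `G` has a connected partition `H 0, …, H (ℓ-1)` such
that each part is adjacent to at most `k` earlier parts and each part induces a
subgraph of maximum degree at most `d`, then `G` is `(k+1)`-colourable with
defect `d`. -/
theorem connected_partition_defective_colouring {V : Type*} [Fintype V]
    (G : SimpleGraph V) (k d ℓ : ℕ) (H : Fin ℓ → Set V)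
    (hnonempty : ∀ i, (H i).Nonempty)
    (hdisj : ∀ i j, i ≠ j → Disjoint (H i) (H j))
    (hcover : ∀ v : V, ∃ i, v ∈ H i)
    (hconn : ∀ i, (G.induce (H i)).Connected)
    (hadj : ∀ i : Fin ℓ,
      {j : Fin ℓ | j < i ∧ ∃ u ∈ H j, ∃ w ∈ H i, G.Adj u w}.ncard ≤ k)
    (hdeg : ∀ i, ∀ v ∈ H i, {w ∈ H i | G.Adj v w}.ncard ≤ d) :
    ∃ c : V → Fin (k + 1), ∀ v : V, {w : V | G.Adj v w ∧ c w = c v}.ncard ≤ d :=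
  connected_partition_defective_colouring_general G k d ℓ H hcover hadj hdeg
end

section
/- Suppose a graph G has a connected partition H_1,…,H_ℓ such that each H_i is adjacent to at most k of the subgraphs H_1,…,H_{i−1}, and each H_i admits a 2-colouring with every monochromatic component of size at most c. Then G admits a (2k+2)-colouring in which every monochromatic component has at most c vertices. -/
/-!
Colour the parts greedily in their given order with `k + 1` colours, so that parts which are
adjacent receive different colours; this is possible since each part has at most `k` earlier
neighbours. Give a vertex the pair (colour of its part, its colour in the 2-colouring of its
part). An edge between different parts is then bichromatic, so a monochromatic connected set
lies inside a single part, where it is monochromatic for that part's 2-colouring.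
-/

theorem Fin.exists_greedy_coloring (k : ℕ) {ℓ : ℕ} (N : Fin ℓ → Fin ℓ → Prop)
    (hN : ∀ i, {j | j < i ∧ N j i}.ncard ≤ k) :
    ∃ p : Fin ℓ → Fin (k + 1), ∀ i j, j < i → N j i → p j ≠ p i := by
  induction ℓ with
  | zero => exact ⟨Fin.elim0, fun i => i.elim0⟩
  | succ n ih =>
    obtain ⟨p, hp⟩ := ih (fun j i => N j.castSucc i.castSucc) fun i =>
      (Set.ncard_le_ncard_of_injOn (t := {j | j < i.castSucc ∧ N j i.castSucc}) Fin.castSucc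
        (fun _ hj => ⟨Fin.castSucc_lt_castSucc_iff.2 hj.1, hj.2⟩)
        (Fin.castSucc_injective n).injOn).trans (hN i.castSucc)
    have hfree : p '' {j | N j.castSucc (Fin.last n)} ≠ Set.univ := by
      intro huniv
      have : k + 1 ≤ k := calc
        k + 1 = (p '' {j | N j.castSucc (Fin.last n)}).ncard := by simp [huniv]
        _ ≤ {j | N j.castSucc (Fin.last n)}.ncard := Set.ncard_image_le
        _ ≤ {j | j < Fin.last n ∧ N j (Fin.last n)}.ncard :=
          Set.ncard_le_ncard_of_injOn Fin.castSucc
            (fun j (hj : N _ _) => ⟨Fin.castSucc_lt_last j, hj⟩) (Fin.castSucc_injective n).injOn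
        _ ≤ k := hN _
      omega
    obtain ⟨a, ha⟩ := (Set.ne_univ_iff_exists_notMem _).1 hfree
    refine ⟨Fin.snoc p a, fun i j hji hNji => ?_⟩
    obtain ⟨j, rfl⟩ := Fin.exists_castSucc_eq.2 (hji.trans_le (Fin.le_last i)).ne
    rcases Fin.eq_castSucc_or_eq_last i with ⟨i, rfl⟩ | rfl
    · simpa using hp i j (Fin.castSucc_lt_castSucc_iff.1 hji) hNji
    · simpa using fun h => ha ⟨j, hNji, h⟩

theorem SimpleGraph.Preconnected.eq_of_forall_adj {V α : Type*} {G : SimpleGraph V}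
    (hG : G.Preconnected) {φ : V → α} (h : ∀ u w, G.Adj u w → φ u = φ w) (u w : V) :
    φ u = φ w := by
  obtain ⟨W⟩ := hG u w
  induction W with
  | nil => rfl
  | cons huv _ ih => exact (h _ _ huv).trans ih

theorem SimpleGraph.eq_of_adj_of_map_eq {V ι α : Type*} [LinearOrder ι] {G : SimpleGraph V}
    {H : ι → Set V} {idx : V → ι} (hidx : ∀ v, v ∈ H (idx v)) {p : ι → α}
    (hp : ∀ i j, j < i → (∃ u ∈ H j, ∃ w ∈ H i, G.Adj u w) → p j ≠ p i)
    {u w : V} (huw : G.Adj u w) (hpuw : p (idx u) = p (idx w)) : idx u = idx w := by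
  by_contra hne
  rcases lt_or_gt_of_ne hne with hlt | hlt
  · exact hp _ _ hlt ⟨u, hidx u, w, hidx w, huw⟩ hpuw
  · exact hp _ _ hlt ⟨w, hidx w, u, hidx u, huw.symm⟩ hpuw.symm

theorem connected_partition_clustered_colouring_general {V : Type*}
    (G : SimpleGraph V) (k c ℓ : ℕ) (H : Fin ℓ → Set V)
    (hcover : ∀ v : V, ∃ i, v ∈ H i)
    (hadj : ∀ i : Fin ℓ,
      {j : Fin ℓ | j < i ∧ ∃ u ∈ H j, ∃ w ∈ H i, G.Adj u w}.ncard ≤ k)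
    (hcluster : ∀ i : Fin ℓ, ∃ f : V → Fin 2,
      ∀ M : Set V, M ⊆ H i → (∀ u ∈ M, ∀ w ∈ M, f u = f w) →
        (G.induce M).Connected → M.ncard ≤ c) :
    ∃ g : V → Fin (2 * k + 2), ∀ M : Set V, (∀ u ∈ M, ∀ w ∈ M, g u = g w) →
      (G.induce M).Connected → M.ncard ≤ c := by
  choose idx hidx using hcover
  choose f hf using hcluster
  obtain ⟨p, hp⟩ := Fin.exists_greedy_coloring k _ hadj
  let g : V → Fin (2 * k + 2) := fun v =>
    Fin.cast (by ring) (finProdFinEquiv (p (idx v), f (idx v) v))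
  refine ⟨g, fun M hmono hM => ?_⟩
  have hpair : ∀ u ∈ M, ∀ w ∈ M, p (idx u) = p (idx w) ∧ f (idx u) u = f (idx w) w :=
    fun u hu w hw => by simpa [g] using hmono u hu w hw
  obtain ⟨⟨v, hv⟩⟩ := hM.nonempty
  have hpart : ∀ u ∈ M, idx u = idx v := fun u hu =>
    hM.preconnected.eq_of_forall_adj (φ := fun x : M => idx x)
      (fun x y hxy => G.eq_of_adj_of_map_eq hidx hp hxy (hpair _ x.2 _ y.2).1) ⟨u, hu⟩ ⟨v, hv⟩
  refine hf (idx v) M (fun u hu => hpart u hu ▸ hidx u) (fun u hu w hw => ?_) hM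
  simpa [hpart u hu, hpart w hw] using (hpair u hu w hw).2

/-- If a graph `G` has a connected partition `H 0, …, H (ℓ-1)` such
that each part is adjacent to at most `k` earlier parts and each part admits a
2-colouring with all monochromatic components of size at most `c`, then `G`
admits a `(2k+2)`-colouring in which every monochromatic component has at most
`c` vertices. -/
theorem connected_partition_clustered_colouring {V : Type*} [Fintype V]
    (G : SimpleGraph V) (k c ℓ : ℕ) (H : Fin ℓ → Set V)
    (hnonempty : ∀ i, (H i).Nonempty)
    (hdisj : ∀ i j, i ≠ j → Disjoint (H i) (H j))
    (hcover : ∀ v : V, ∃ i, v ∈ H i)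
    (hconn : ∀ i, (G.induce (H i)).Connected)
    (hadj : ∀ i : Fin ℓ,
      {j : Fin ℓ | j < i ∧ ∃ u ∈ H j, ∃ w ∈ H i, G.Adj u w}.ncard ≤ k)
    (hcluster : ∀ i : Fin ℓ, ∃ f : V → Fin 2,
      ∀ M : Set V, M ⊆ H i → (∀ u ∈ M, ∀ w ∈ M, f u = f w) →
        (G.induce M).Connected → M.ncard ≤ c) :
    ∃ g : V → Fin (2 * k + 2), ∀ M : Set V, (∀ u ∈ M, ∀ w ∈ M, g u = g w) →
      (G.induce M).Connected → M.ncard ≤ c :=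
  connected_partition_clustered_colouring_general G k c ℓ H hcover hadj hcluster
end

section
/- Let G be a graph and T a tree with V(T) = V(G) such that for every edge xy of T, the number of edges of G with one endpoint in the component of T−xy containing x and the other endpoint in the component containing y is at most k. Then G admits a 2-colouring in which every vertex has at most k neighbours of its own colour. -/
/-!
Root `T` at a vertex `r` and order `V` by ancestry. Colour top-down, giving each vertex the
colour opposite to that of its highest ancestor among its `G`-neighbours. Let `w` be a neighbour
of `v` with the same colour and let `e` be the tree edge from `v` to its parent. If `w` is not
below `v`, the edge `vw` crosses `e`. Otherwise `v` is an ancestor neighbour of `w` but not the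
highest one, which lies strictly above `v`, and the edge from it to `w` crosses `e`. Distinct
`w` give distinct crossing edges, and the root, which is above everything, gets no neighbour
of its own colour.
-/

open SimpleGraph

section LowerNeighborColoring

variable {α : Type*} [PartialOrder α] (G : SimpleGraph α)

open Classical in
noncomputable def lowerNeighborColoring [WellFoundedLT α] : α → Bool :=
  wellFounded_lt.fix fun w colour =>
    if h : (G.neighborSet w ∩ Set.Iio w).Nonempty then
      !colour (wellFounded_lt.min _ h) (wellFounded_lt.min_mem _ h).2
    else false

variable {G}

theorem exists_isLeast_lowerNeighbor [WellFoundedLT α]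
    (hchain : ∀ w : α, IsChain (· ≤ ·) (Set.Iic w)) {w : α}
    (h : (G.neighborSet w ∩ Set.Iio w).Nonempty) :
    ∃ m, IsLeast (G.neighborSet w ∩ Set.Iio w) m ∧
      lowerNeighborColoring G w = !lowerNeighborColoring G m := by
  set m := wellFounded_lt.min _ h
  have hm : m ∈ G.neighborSet w ∩ Set.Iio w := wellFounded_lt.min_mem _ h
  refine ⟨m, ⟨hm, fun y hy => ?_⟩, ?_⟩
  · rcases (hchain w).total hy.2.le hm.2.le with hym | hmy
    · exact (hym.lt_or_eq.resolve_left (wellFounded_lt.not_lt_min _ hy)).ge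
    · exact hmy
  · rw [lowerNeighborColoring, WellFounded.fix_eq, dif_pos h]

theorem ncard_monochromaticNeighbors_le [Finite α]
    (hchain : ∀ w : α, IsChain (· ≤ ·) (Set.Iic w)) (v : α) :
    {w | G.Adj v w ∧ lowerNeighborColoring G w = lowerNeighborColoring G v}.ncard ≤
      {e : α × α | ¬ v ≤ e.1 ∧ v ≤ e.2 ∧ G.Adj e.1 e.2}.ncard := by
  classical
  set c := lowerNeighborColoring G
  have above (w : α) (hvw : G.Adj v w) (hc : c w = c v) (hle : v ≤ w) :
      ∃ m, ¬ v ≤ m ∧ G.Adj m w := by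
    have hv : v ∈ G.neighborSet w ∩ Set.Iio w := ⟨hvw.symm, hle.lt_of_ne hvw.ne⟩
    obtain ⟨m, ⟨hm, hmin⟩, hcm⟩ := exists_isLeast_lowerNeighbor hchain ⟨v, hv⟩
    have hmv : m ≠ v := by rintro rfl; cases h : c m <;> simp_all [c]
    exact ⟨m, fun hvm => hmv ((hmin hv).antisymm hvm), hm.1.symm⟩
  have : Nonempty α := ⟨v⟩
  choose! m hm using above
  refine Set.ncard_le_ncard_of_injOn (fun w => if v ≤ w then (m w, w) else (w, v)) ?_ ?_
    (Set.toFinite _)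
  · rintro w ⟨hvw, hc⟩
    by_cases hle : v ≤ w
    · simpa [hle] using hm w hvw hc hle
    · simpa [hle] using hvw.symm
  · rintro w ⟨hvw, -⟩ w' ⟨hvw', -⟩ heq
    by_cases hle : v ≤ w <;> by_cases hle' : v ≤ w' <;>
      simp only [hle, hle', if_true, if_false, Prod.mk.injEq] at heq
    · exact heq.2
    · exact absurd heq.2 hvw.ne'
    · exact absurd heq.2.symm hvw'.ne'
    · exact heq.1

end LowerNeighborColoring

theorem SimpleGraph.Walk.reachable_deleteEdges_of_notMem_support {V : Type*} {T : SimpleGraph V}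
    {a b x y : V} (q : T.Walk a b) (hy : y ∉ q.support) :
    (T.deleteEdges {s(x, y)}).Reachable a b :=
  reachable_deleteEdges_iff_exists_walk.mpr
    ⟨q, fun he => hy (q.snd_mem_support_of_mem_edges he)⟩

namespace SimpleGraph.IsTree

variable {V : Type*} {T : SimpleGraph V} (hT : T.IsTree)

noncomputable def path (u v : V) : T.Walk u v := (hT.existsUnique_path u v).choose

theorem isPath_path (u v : V) : (hT.path u v).IsPath := (hT.existsUnique_path u v).choose_spec.1

theorem eq_path {u v : V} {q : T.Walk u v} (hq : q.IsPath) : q = hT.path u v :=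
  (hT.existsUnique_path u v).choose_spec.2 q hq

theorem exists_path_eq_append {r x w : V} (hx : x ∈ (hT.path r w).support) :
    ∃ q : T.Walk x w, hT.path r w = (hT.path r x).append q := by
  obtain ⟨p, q, hp, -, hpq⟩ := (hT.isPath_path r w).mem_support_iff_exists_append.mp hx
  exact ⟨q, hT.eq_path hp ▸ hpq⟩

theorem support_path_prefix {r x w : V} (hx : x ∈ (hT.path r w).support) :
    (hT.path r x).support <+: (hT.path r w).support := by
  obtain ⟨q, hq⟩ := hT.exists_path_eq_append hx
  exact hq ▸ Walk.support_prefix_support_append _ q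

abbrev rootedOrder (r : V) : PartialOrder V where
  le x w := x ∈ (hT.path r w).support
  le_refl w := Walk.end_mem_support _
  le_trans _ _ _ hxy hyw := (hT.support_path_prefix hyw).subset hxy
  le_antisymm x w hxw hwx := by
    obtain ⟨q, hq⟩ := hT.exists_path_eq_append hxw
    have hlen := (hT.support_path_prefix hwx).length_le
    rw [hq, Walk.length_support, Walk.length_support, Walk.length_append] at hlen
    exact Walk.eq_of_length_eq_zero (p := q) (by omega)

theorem isChain_Iic_rootedOrder (r w : V) :
    letI := hT.rootedOrder r; IsChain (· ≤ ·) (Set.Iic w) := by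
  intro x hx y hy _
  rcases List.prefix_or_prefix_of_prefix (hT.support_path_prefix hx)
    (hT.support_path_prefix hy) with hxy | hyx
  · exact Or.inl (hxy.subset (Walk.end_mem_support _))
  · exact Or.inr (hyx.subset (Walk.end_mem_support _))

theorem root_le (r w : V) : letI := hT.rootedOrder r; r ≤ w := Walk.start_mem_support _

theorem exists_adj_mem_support_path {r v : V} (hv : v ≠ r) :
    ∃ p, T.Adj p v ∧ p ∈ (hT.path r v).support := by
  have hnil : ¬ (hT.path r v).Nil := Walk.not_nil_of_ne hv.symm
  exact ⟨_, Walk.adj_penultimate hnil, Walk.getVert_mem_support _ _⟩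

variable {r p v : V}

theorem reachable_deleteEdges_of_le (hp : p ∈ (hT.path r v).support) (hpv : p ≠ v) {w : V}
    (hw : v ∈ (hT.path r w).support) : (T.deleteEdges {s(p, v)}).Reachable v w := by
  obtain ⟨q, hq⟩ := hT.exists_path_eq_append hw
  refine reachable_deleteEdges_iff_exists_walk.mpr ⟨q, fun he => ?_⟩
  have hpath := hT.isPath_path r w
  rw [hq] at hpath
  exact hpath.ne_of_mem_support_of_append hpv hp (q.fst_mem_support_of_mem_edges he) rfl

theorem reachable_deleteEdges_of_not_le (hp : p ∈ (hT.path r v).support) (hpv : p ≠ v) {w : V}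
    (hw : v ∉ (hT.path r w).support) : (T.deleteEdges {s(p, v)}).Reachable p w := by
  have hvp : v ∉ (hT.path r p).support := fun hvp =>
    hpv ((hT.rootedOrder r).le_antisymm p v hp hvp)
  exact ((hT.path r p).reachable_deleteEdges_of_notMem_support hvp).symm.trans
    ((hT.path r w).reachable_deleteEdges_of_notMem_support hw)

theorem reachable_deleteEdges_iff_le (hpv : T.Adj p v) (hp : p ∈ (hT.path r v).support) {w : V} :
    (T.deleteEdges {s(p, v)}).Reachable v w ↔ v ∈ (hT.path r w).support := by
  refine ⟨fun hvw => ?_, hT.reachable_deleteEdges_of_le hp hpv.ne⟩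
  by_contra hw
  exact isBridge_iff.mp (isAcyclic_iff_forall_adj_isBridge.mp hT.isAcyclic hpv)
    ((hT.reachable_deleteEdges_of_not_le hp hpv.ne hw).trans hvw.symm)

theorem reachable_deleteEdges_iff_not_le (hpv : T.Adj p v) (hp : p ∈ (hT.path r v).support)
    {w : V} : (T.deleteEdges {s(p, v)}).Reachable p w ↔ v ∉ (hT.path r w).support := by
  refine ⟨fun hpw hw => ?_, hT.reachable_deleteEdges_of_not_le hp hpv.ne⟩
  exact isBridge_iff.mp (isAcyclic_iff_forall_adj_isBridge.mp hT.isAcyclic hpv)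
    (hpw.trans (hT.reachable_deleteEdges_of_le hp hpv.ne hw).symm)

end SimpleGraph.IsTree

/-- If `T` is a tree on the vertex set of `G` such that for every
edge `xy` of `T` at most `k` edges of `G` cross between the two components of
`T - xy`, then `G` is 2-colourable with defect `k`. -/
theorem tree_cut_bound_two_colouring {V : Type*} [Fintype V]
    (G T : SimpleGraph V) (hT : T.IsTree) (k : ℕ)
    (hcut : ∀ x y : V, T.Adj x y →
      {p : V × V |
          (T.deleteEdges {s(x, y)}).Reachable x p.1 ∧
          (T.deleteEdges {s(x, y)}).Reachable y p.2 ∧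
          G.Adj p.1 p.2}.ncard ≤ k) :
    ∃ c : V → Bool, ∀ v : V, {w : V | G.Adj v w ∧ c w = c v}.ncard ≤ k := by
  obtain ⟨r⟩ := hT.connected.nonempty
  let := hT.rootedOrder r
  refine ⟨lowerNeighborColoring G, fun v =>
    (ncard_monochromaticNeighbors_le (hT.isChain_Iic_rootedOrder r) v).trans ?_⟩
  obtain rfl | hv := eq_or_ne v r
  · simp [hT.root_le]
  · obtain ⟨p, hpv, hp⟩ := hT.exists_adj_mem_support_path hv
    refine (congrArg Set.ncard ?_).trans_le (hcut p v hpv)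
    ext e
    simp only [Set.mem_ofPred_eq, hT.reachable_deleteEdges_iff_not_le hpv hp,
      hT.reachable_deleteEdges_iff_le hpv hp]
    rfl
end

section
/- For every s ≥ 1, t ≥ max{s,3}, and c ≥ 1, define graphs G_s recursively: G_1 is a path on c+1 vertices, and for s ≥ 2, G_s is obtained from c disjoint copies of G_{s−1} by adding one vertex adjacent to all others. Then every s-colouring of G_s has a monochromatic component with more than c vertices. -/
/-- Add a dominating vertex (the vertex `none`) to a graph. -/
def SimpleGraph.addDominatingVertex {α : Type*} (H : SimpleGraph α) :
    SimpleGraph (Option α) where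
  Adj u v :=
    match u, v with
    | none, none => False
    | none, some _ => True
    | some _, none => True
    | some a, some b => H.Adj a b
  symm := by
    constructor
    rintro (_ | a) (_ | b) h <;> simp_all
    exact h.symm
  loopless := by
    constructor
    rintro (_ | a) h <;> simp_all

/-- The disjoint union of `c` copies of a graph. -/
def SimpleGraph.copies {α : Type*} (c : ℕ) (H : SimpleGraph α) :
    SimpleGraph (Fin c × α) where
  Adj u v := u.1 = v.1 ∧ H.Adj u.2 v.2
  symm := ⟨by rintro ⟨i, a⟩ ⟨j, b⟩ ⟨h1, h2⟩; exact ⟨h1.symm, h2.symm⟩⟩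
  loopless := ⟨by rintro ⟨i, a⟩ ⟨-, h⟩; exact H.irrefl h⟩

/-- Vertex type of the recursively defined graph `G_{s+1}`. -/
def GsVertex (c : ℕ) : ℕ → Type
  | 0 => Fin (c + 1)
  | s + 1 => Option (Fin c × GsVertex c s)

/-- The recursively defined graph: `Gs c 0 = G_1` is a path on `c+1` vertices,
and `Gs c s = G_{s+1}` is obtained from `c` disjoint copies of `Gs c (s-1)` by
adding one dominating vertex. -/
def Gs (c : ℕ) : (s : ℕ) → SimpleGraph (GsVertex c s)
  | 0 => SimpleGraph.pathGraph (c + 1)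
  | s + 1 => (SimpleGraph.copies c (Gs c s)).addDominatingVertex

/-!
Induction on `s`. In `G_1` one colour gives the whole path, which has `c + 1` vertices. For the
step, let `k` be the colour of the dominating vertex. If some copy of `G_{s-1}` avoids `k`, it is
`(s-1)`-coloured and the induction hypothesis applies inside it. Otherwise every copy contains a
vertex of colour `k`, and these `c` vertices together with the dominating vertex form a
monochromatic star with `c + 1` vertices.
-/

namespace SimpleGraph

variable {V W κ κ' : Type*}

/-- Witnesses that `f` does not have clustering `c`: a monochromatic connected set with more than
`c` vertices lies in a monochromatic component at least as large. -/
def ExceedsClustering (G : SimpleGraph V) (f : V → κ) (c : ℕ) : Prop :=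
  ∃ M : Set V, (∀ u ∈ M, ∀ w ∈ M, f u = f w) ∧ (G.induce M).Connected ∧ c < M.ncard

section ExceedsClustering

variable {G : SimpleGraph V} {H : SimpleGraph W} {c : ℕ}

theorem ExceedsClustering.comp {g : V → κ} (h : G.ExceedsClustering g c) (k : κ → κ') :
    G.ExceedsClustering (k ∘ g) c := by
  obtain ⟨M, hmono, hconn, hcard⟩ := h
  exact ⟨M, fun u hu w hw => congrArg k (hmono u hu w hw), hconn, hcard⟩

theorem ExceedsClustering.of_copy {f : V → κ} (φ : Copy H G)
    (h : H.ExceedsClustering (f ∘ φ) c) : G.ExceedsClustering f c := by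
  obtain ⟨M, hmono, hconn, hcard⟩ := h
  refine ⟨φ '' M, ?_, ?_, ?_⟩
  · rintro _ ⟨u, hu, rfl⟩ _ ⟨w, hw, rfl⟩
    exact hmono u hu w hw
  · exact hconn.map (induceHom φ.toHom (Set.mapsTo_image φ M))
      (Set.surjective_mapsTo_image_restrict φ M)
  · have hφ : Function.Injective φ := φ.injective
    rwa [Set.ncard_image_of_injective M hφ]

theorem exceedsClustering_of_subsingleton [Subsingleton κ] (hG : G.Connected)
    (hc : c < Nat.card V) (f : V → κ) : G.ExceedsClustering f c :=
  ⟨Set.univ, fun _ _ _ _ => Subsingleton.elim _ _, (induceUnivIso G).connected_iff.mpr hG,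
    by rwa [Set.ncard_univ]⟩

end ExceedsClustering

theorem induce_connected_of_forall_adj {G : SimpleGraph V} {s : Set V} {u : V} (hu : u ∈ s)
    (h : ∀ v ∈ s, v ≠ u → G.Adj u v) : (G.induce s).Connected := by
  rw [connected_iff_exists_forall_reachable]
  refine ⟨⟨u, hu⟩, fun ⟨v, hv⟩ => ?_⟩
  by_cases hvu : v = u
  · subst hvu
    rfl
  · exact Adj.reachable (h v hv hvu)

def Copy.intoCopies {H : SimpleGraph W} {c : ℕ} (i : Fin c) : Copy H (H.copies c) :=
  ⟨⟨fun a => (i, a), fun h => ⟨rfl, h⟩⟩, fun _ _ h => congrArg Prod.snd h⟩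

def Copy.intoAddDominatingVertex {H : SimpleGraph W} : Copy H H.addDominatingVertex :=
  ⟨⟨some, fun h => h⟩, Option.some_injective W⟩

theorem exceedsClustering_copies_addDominatingVertex {H : SimpleGraph W} {c n : ℕ}
    (hH : ∀ g : W → Fin (n + 1), H.ExceedsClustering g c)
    (f : Option (Fin c × W) → Fin (n + 2)) :
    (H.copies c).addDominatingVertex.ExceedsClustering f c := by
  by_cases hmissing : ∃ i : Fin c, ∀ a : W, f (some (i, a)) ≠ f none
  · obtain ⟨i, hi⟩ := hmissing
    choose g hg using fun a => Fin.exists_succAbove_eq (hi a)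
    refine .of_copy (Copy.intoAddDominatingVertex.comp (Copy.intoCopies i)) ?_
    convert (hH g).comp (f none).succAbove using 1
    funext a
    exact (hg a).symm
  · push Not at hmissing
    choose a ha using hmissing
    refine ⟨insert none (Set.range fun i => some (i, a i)), ?_, ?_, ?_⟩
    · have hcol : ∀ u ∈ insert none (Set.range fun i => some (i, a i)), f u = f none := by
        rintro _ (rfl | ⟨i, rfl⟩)
        exacts [rfl, ha i]
      exact fun u hu w hw => (hcol u hu).trans (hcol w hw).symm
    · refine induce_connected_of_forall_adj (Set.mem_insert _ _) ?_
      rintro _ (rfl | ⟨i, rfl⟩) hne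
      exacts [absurd rfl hne, trivial]
    · have hinj : Function.Injective fun i : Fin c => some (i, a i) :=
        fun i j h => congrArg Prod.fst (Option.some.inj h)
      rw [Set.ncard_insert_of_notMem (by simp), ← Set.image_univ,
        Set.ncard_image_of_injective _ hinj, Set.ncard_univ, Nat.card_fin]
      exact c.lt_succ_self

end SimpleGraph

open SimpleGraph

theorem Gs_exceedsClustering (c s : ℕ) (f : GsVertex c s → Fin (s + 1)) :
    (Gs c s).ExceedsClustering f c := by
  induction s with
  | zero =>
    exact exceedsClustering_of_subsingleton (κ := Fin 1) (pathGraph_connected c) (by simp) f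
  | succ s ih => exact exceedsClustering_copies_addDominatingVertex ih f

theorem Gs_not_s_colourable_with_clustering_general (s c : ℕ)
    (f : GsVertex c (s - 1) → Fin s) :
    ∃ M : Set (GsVertex c (s - 1)), (∀ u ∈ M, ∀ w ∈ M, f u = f w) ∧
      ((Gs c (s - 1)).induce M).Connected ∧ c < M.ncard := by
  cases s with
  | zero => exact (f (0 : Fin (c + 1))).elim0
  | succ s => exact Gs_exceedsClustering c s f

/-- For `s ≥ 1`, `t ≥ max{s,3}`, `c ≥ 1`, every `s`-colouring of
`G_s` has a monochromatic component with more than `c` vertices. -/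
theorem Gs_not_s_colourable_with_clustering (s t c : ℕ)
    (hs : 1 ≤ s) (ht : max s 3 ≤ t) (hc : 1 ≤ c)
    (f : GsVertex c (s - 1) → Fin s) :
    ∃ M : Set (GsVertex c (s - 1)), (∀ u ∈ M, ∀ w ∈ M, f u = f w) ∧
      ((Gs c (s - 1)).induce M).Connected ∧ c < M.ncard :=
  Gs_not_s_colourable_with_clustering_general s c f
end

section
/- Every graph G with layered treewidth at most k satisfies scol_r(G) ≤ k(2r+1) for every r ≥ 1: there exists a linear ordering ⪯ of V(G) such that for every vertex v, the number of vertices x ⪯ v reachable from v by a path of length at most r whose internal vertices all come strictly after v in ⪯ is at most k(2r+1). -/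
/-!
Root the tree `T` at some node and let `D u` be the depth of the highest node whose bag contains
`u`. Order the vertices by `D`, breaking ties arbitrarily. Let `t` be the highest node whose bag
contains `v`. If `x ⪯ v` is reached from `v` by a path whose internal vertices come after `v`,
then the subtrees of the internal vertices have their highest node at depth `≥ D v`, so starting
from the subtree of `v` they stay below `t` one edge at a time; the subtree of `x` then meets the
part below `t` and has a node at depth `≤ D v`, so it contains `t`. Thus `x` lies in the bag of
`t` and in one of the `2r + 1` layers around that of `v`.
-/

open SimpleGraph

namespace SimpleGraph

variable {ι : Type*} {T : SimpleGraph ι}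

lemma IsTree.length_eq_dist_of_isPath (hT : T.IsTree) {u v : ι} {p : T.Walk u v}
    (hp : p.IsPath) : p.length = T.dist u v := by
  obtain ⟨q, hq, hql⟩ := hT.connected.exists_path_of_dist u v
  rw [← hql, (hT.existsUnique_path u v).unique hp hq]

/-- `t` separates `s` from `root`; in a tree rooted at `root`, `s` lies in the subtree at `t`. -/
def Below (T : SimpleGraph ι) (root t s : ι) : Prop :=
  ∀ p : T.Walk root s, t ∈ p.support

variable {root t : ι}

lemma below_self : T.Below root t t := fun p => p.end_mem_support

lemma Below.eq_of_dist_le (hT : T.Connected) {s : ι} (h : T.Below root t s)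
    (hd : T.dist root s ≤ T.dist root t) : s = t := by
  classical
  obtain ⟨p, hp⟩ := hT.exists_walk_length_eq_dist root s
  have hts := h p
  have htake : T.dist root t ≤ (p.takeUntil t hts).length := dist_le _
  have hsplit := congrArg Walk.length (p.take_spec hts)
  rw [Walk.length_append] at hsplit
  exact (Walk.eq_of_length_eq_zero (by omega : (p.dropUntil t hts).length = 0)).symm

lemma IsTree.below_boundary (hT : T.IsTree) {x y : ι} (hx : T.Below root t x)
    (hy : ¬ T.Below root t y) (hxy : T.Adj x y) : x = t ∧ T.dist root y < T.dist root t := by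
  classical
  simp only [Below, not_forall] at hy
  obtain ⟨W, htW⟩ := hy
  have htQ : t ∉ W.bypass.support := fun h => htW (W.support_bypass_subset_support h)
  have hxt : x = t := by
    have ht := hx (W.bypass.concat hxy.symm)
    rw [Walk.support_concat, List.mem_append, List.mem_singleton] at ht
    exact (ht.resolve_left htQ).symm
  subst hxt
  refine ⟨rfl, ?_⟩
  have hQ := W.bypass_isPath
  have hlen := hT.length_eq_dist_of_isPath (hQ.concat htQ hxy.symm)
  rw [Walk.length_concat, hT.length_eq_dist_of_isPath hQ] at hlen
  omega

lemma exists_adj_boundary_of_connected_induce {S : Set ι} (hS : (T.induce S).Connected)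
    {P : ι → Prop} {a b : ι} (ha : a ∈ S) (hb : b ∈ S) (hPa : P a) (hPb : ¬ P b) :
    ∃ x y, T.Adj x y ∧ x ∈ S ∧ y ∈ S ∧ P x ∧ ¬ P y := by
  obtain ⟨p⟩ := hS.preconnected ⟨a, ha⟩ ⟨b, hb⟩
  obtain ⟨d, -, hd₁, hd₂⟩ := p.exists_boundary_dart {z | P z} hPa hPb
  exact ⟨d.fst, d.snd, d.adj, d.fst.2, d.snd.2, hd₁, hd₂⟩

lemma IsTree.below_of_connected_induce (hT : T.IsTree) {S : Set ι}
    (hS : (T.induce S).Connected) {s₀ : ι} (hs₀ : s₀ ∈ S) (h₀ : T.Below root t s₀)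
    (hdist : ∀ s ∈ S, T.dist root t ≤ T.dist root s) {s : ι} (hs : s ∈ S) :
    T.Below root t s := by
  by_contra h
  obtain ⟨x, y, hxy, -, hy, hx, hny⟩ := exists_adj_boundary_of_connected_induce hS hs₀ hs h₀ h
  have hlt := (hT.below_boundary hx hny hxy).2
  have hle := hdist y hy
  omega

lemma IsTree.mem_of_connected_induce (hT : T.IsTree) {S : Set ι}
    (hS : (T.induce S).Connected) {s₀ s₁ : ι} (hs₀ : s₀ ∈ S) (h₀ : T.Below root t s₀)
    (hs₁ : s₁ ∈ S) (hd : T.dist root s₁ ≤ T.dist root t) : t ∈ S := by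
  by_cases h₁ : T.Below root t s₁
  · exact h₁.eq_of_dist_le hT.connected hd ▸ hs₁
  · obtain ⟨x, y, hxy, hx, -, hbx, hby⟩ :=
      exists_adj_boundary_of_connected_induce hS hs₀ hs₁ h₀ h₁
    exact (hT.below_boundary hbx hby hxy).1 ▸ hx

lemma Walk.layer_le_add_length {V : Type*} {G : SimpleGraph V} {L : V → ℕ}
    (hlayer : ∀ u v : V, G.Adj u v → L u ≤ L v + 1 ∧ L v ≤ L u + 1)
    {u v : V} (p : G.Walk u v) : L u ≤ L v + p.length ∧ L v ≤ L u + p.length := by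
  induction p with
  | nil => simp
  | cons h q ih =>
    have := hlayer _ _ h
    rw [Walk.length_cons]
    omega

end SimpleGraph

section TreeDecomposition

variable {V ι : Type*} {G : SimpleGraph V} {T : SimpleGraph ι} {bags : ι → Set V} {root : ι}

noncomputable def topDepth (T : SimpleGraph ι) (bags : ι → Set V) (root : ι) (u : V) : ℕ :=
  sInf (T.dist root '' {y | u ∈ bags y})

lemma topDepth_le {u : V} {s : ι} (hu : u ∈ bags s) : topDepth T bags root u ≤ T.dist root s :=
  Nat.sInf_le ⟨s, hu, rfl⟩

lemma exists_topDepth_eq {u : V} {s : ι} (hu : u ∈ bags s) :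
    ∃ t, u ∈ bags t ∧ T.dist root t = topDepth T bags root u :=
  Nat.sInf_mem (s := T.dist root '' {y | u ∈ bags y}) ⟨_, s, hu, rfl⟩

variable (hT : T.IsTree) (hedge : ∀ u v : V, G.Adj u v → ∃ x : ι, u ∈ bags x ∧ v ∈ bags x)
  (hsub : ∀ v : V, (T.induce {x : ι | v ∈ bags x}).Connected)
include hT hedge hsub

lemma exists_below_of_walk {t : ι} {u x : V} (p : G.Walk u x)
    (hu : ∃ s, u ∈ bags s ∧ T.Below root t s)
    (hp : ∀ w ∈ p.support, w ≠ x → T.dist root t ≤ topDepth T bags root w) :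
    ∃ s, x ∈ bags s ∧ T.Below root t s := by
  induction p with
  | nil => exact hu
  | @cons u u₂ x h q ih =>
    by_cases hux : u = x
    · exact hux ▸ hu
    obtain ⟨s, hus, hs⟩ := hu
    obtain ⟨b, hub, hu₂b⟩ := hedge u u₂ h
    have hb : T.Below root t b := hT.below_of_connected_induce (hsub u) hus hs
      (fun s' hs' => (hp u (by simp) hux).trans (topDepth_le hs')) hub
    exact ih ⟨b, hu₂b, hb⟩ (fun w hw hwx => hp w (by simp [hw]) hwx)

lemma mem_bags_of_walk {v x : V} {t : ι} (hvt : v ∈ bags t)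
    (ht : T.dist root t = topDepth T bags root v) (p : G.Walk v x)
    (hp : ∀ w ∈ p.support, w ≠ x → topDepth T bags root v ≤ topDepth T bags root w)
    (hx : topDepth T bags root x ≤ topDepth T bags root v) : x ∈ bags t := by
  obtain ⟨s, hxs, hs⟩ := exists_below_of_walk hT hedge hsub p ⟨t, hvt, below_self⟩ (ht ▸ hp)
  obtain ⟨s₁, hxs₁, hs₁⟩ := exists_topDepth_eq (T := T) (root := root) hxs
  exact hT.mem_of_connected_induce (hsub x) hxs hs hxs₁ (by omega)

end TreeDecomposition

lemma ncard_sep_mem_finset_le {V : Type*} (L : V → ℕ) (B : Set V) {k : ℕ}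
    (hB : ∀ i, {v ∈ B | L v = i}.ncard ≤ k) (s : Finset ℕ) :
    {v ∈ B | L v ∈ s}.ncard ≤ s.card * k := by
  classical
  induction s using Finset.induction with
  | empty => simp
  | @insert a s ha ih =>
    have hsplit : {v ∈ B | L v ∈ insert a s} = {v ∈ B | L v = a} ∪ {v ∈ B | L v ∈ s} := by
      ext v
      simp only [Set.mem_ofPred_eq, Set.mem_union, Finset.mem_insert]
      tauto
    calc {v ∈ B | L v ∈ insert a s}.ncard
        ≤ {v ∈ B | L v = a}.ncard + {v ∈ B | L v ∈ s}.ncard := hsplit ▸ Set.ncard_union_le _ _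
      _ ≤ k + s.card * k := add_le_add (hB a) ih
      _ = (insert a s).card * k := by rw [Finset.card_insert_of_notMem ha]; ring

lemma exists_injective_monotone_refinement {V : Type*} [Fintype V] (f : V → ℕ) :
    ∃ ord : V → ℕ, Function.Injective ord ∧ ∀ u w, ord u ≤ ord w → f u ≤ f w := by
  set e := Fintype.equivFin V
  have hmono : ∀ u w, Fintype.card V * f u + e u ≤ Fintype.card V * f w + e w → f u ≤ f w := by
    intro u w h
    by_contra! hlt
    have h₁ : Fintype.card V * (f w + 1) ≤ Fintype.card V * f u := Nat.mul_le_mul_left _ hlt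
    have h₂ : (e w : ℕ) < Fintype.card V := (e w).isLt
    nlinarith
  refine ⟨fun u => Fintype.card V * f u + e u, fun u w h => ?_, hmono⟩
  have hf : f u = f w := le_antisymm (hmono u w h.le) (hmono w u h.ge)
  simp only [hf, add_right_inj] at h
  exact e.injective (Fin.ext h)

theorem layeredTreewidth_strongColouringNumber_general {V : Type*} [Fintype V]
    (G : SimpleGraph V) (k r : ℕ)
    {ι : Type*} (T : SimpleGraph ι) (hT : T.IsTree) (bags : ι → Set V)
    (L : V → ℕ)
    (hlayer : ∀ u v : V, G.Adj u v → L u ≤ L v + 1 ∧ L v ≤ L u + 1)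
    (hedge : ∀ u v : V, G.Adj u v → ∃ x : ι, u ∈ bags x ∧ v ∈ bags x)
    (hsub : ∀ v : V, ((T.induce {x : ι | v ∈ bags x}).Connected))
    (hwidth : ∀ (x : ι) (i : ℕ), {v ∈ bags x | L v = i}.ncard ≤ k) :
    ∃ ord : V → ℕ, Function.Injective ord ∧
      ∀ v : V,
        {x : V | ord x ≤ ord v ∧
          ∃ p : G.Walk v x, p.IsPath ∧ p.length ≤ r ∧
            ∀ w ∈ p.support, w ≠ v → w ≠ x → ord v < ord w}.ncard ≤ k * (2 * r + 1) := by
  obtain ⟨root⟩ := hT.connected.nonempty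
  obtain ⟨ord, hinj, hord⟩ := exists_injective_monotone_refinement (topDepth T bags root)
  refine ⟨ord, hinj, fun v => ?_⟩
  obtain ⟨⟨s, hvs⟩⟩ := (hsub v).nonempty
  obtain ⟨t, hvt, ht⟩ := exists_topDepth_eq (root := root) hvs
  have hsubset : {x : V | ord x ≤ ord v ∧
      ∃ p : G.Walk v x, p.IsPath ∧ p.length ≤ r ∧
        ∀ w ∈ p.support, w ≠ v → w ≠ x → ord v < ord w} ⊆
      {u ∈ bags t | L u ∈ Finset.Icc (L v - r) (L v + r)} := by
    rintro x ⟨hxv, p, -, hpr, hint⟩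
    refine ⟨mem_bags_of_walk hT hedge hsub hvt ht p (fun w hw hwx => ?_) (hord x v hxv), ?_⟩
    · by_cases hwv : w = v
      · rw [hwv]
      · exact hord v w (hint w hw hwv hwx).le
    · have := p.layer_le_add_length hlayer
      rw [Finset.mem_Icc]
      omega
  calc _ ≤ {u ∈ bags t | L u ∈ Finset.Icc (L v - r) (L v + r)}.ncard :=
        Set.ncard_le_ncard hsubset (Set.toFinite _)
    _ ≤ (Finset.Icc (L v - r) (L v + r)).card * k :=
        ncard_sep_mem_finset_le L (bags t) (hwidth t) _
    _ ≤ k * (2 * r + 1) := by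
        rw [Nat.card_Icc, mul_comm]
        gcongr
        omega

/-- Every graph `G` with layered treewidth at most `k` (witnessed by
a tree decomposition `bags` over a tree `T` and a layering `L` such that every bag
meets every layer in at most `k` vertices) satisfies `scol_r(G) ≤ k(2r+1)` for
every `r ≥ 1`: there is a linear ordering of the vertices (encoded by an injection
`ord : V → ℕ`) such that for every vertex `v`, at most `k(2r+1)` vertices `x` with
`ord x ≤ ord v` are joined to `v` by a path of length at most `r` all of whose
internal vertices come strictly after `v` in the ordering. -/
theorem layeredTreewidth_strongColouringNumber {V : Type*} [Fintype V]
    (G : SimpleGraph V) (k r : ℕ) (hr : 1 ≤ r)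
    {ι : Type*} (T : SimpleGraph ι) (hT : T.IsTree) (bags : ι → Set V)
    (L : V → ℕ)
    (hlayer : ∀ u v : V, G.Adj u v → L u ≤ L v + 1 ∧ L v ≤ L u + 1)
    (hedge : ∀ u v : V, G.Adj u v → ∃ x : ι, u ∈ bags x ∧ v ∈ bags x)
    (hsub : ∀ v : V, ((T.induce {x : ι | v ∈ bags x}).Connected))
    (hwidth : ∀ (x : ι) (i : ℕ), {v ∈ bags x | L v = i}.ncard ≤ k) :
    ∃ ord : V → ℕ, Function.Injective ord ∧
      ∀ v : V,
        {x : V | ord x ≤ ord v ∧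
          ∃ p : G.Walk v x, p.IsPath ∧ p.length ≤ r ∧
            ∀ w ∈ p.support, w ≠ v → w ≠ x → ord v < ord w}.ncard ≤ k * (2 * r + 1) :=
  layeredTreewidth_strongColouringNumber_general G k r T hT bags L hlayer hedge hsub hwidth
end
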